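/- arXiv:2512.08948 — 6 statements merged into one kernel-verified Lean document; each statement's English description precedes it below -/
import Mathlib

section
/- Let (β_k) be a nonnegative real sequence with β_k → 0 and ∑ β_k = ∞. Then for any real number a and any sequence (e_k) with e_k → 0, the sequence S_k = ∑_{i=0}^{k} (∏_{j=i+1}^{k} (1 − β_j)) β_i e_i + a ∏_{j=0}^{k} (1 − β_j) converges to 0 as k → ∞. -/
/-!
Writing `S_k` for the averaged sequence, splitting off the last factor `1 - β_{k+1}` gives the
convex recurrence `S_{k+1} = (1 - β_{k+1}) S_k + β_{k+1} e_{k+1}`. Once `β_k ≤ 1` and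
`‖e_k‖ ≤ c` for `k > N`, induction gives `‖S_k‖ - c ≤ (∏_{N<j≤k} (1 - β_j)) (‖S_N‖ - c)`, and
the product is at most `exp (-∑_{N<j≤k} β_j) → 0`.
-/

open Filter Finset Topology

lemma prod_one_sub_le_exp_neg_sum {ι : Type*} (s : Finset ι) (b : ι → ℝ)
    (hb : ∀ i ∈ s, b i ≤ 1) :
    ∏ i ∈ s, (1 - b i) ≤ Real.exp (-∑ i ∈ s, b i) := by
  rw [← sum_neg_distrib, Real.exp_sum]
  exact prod_le_prod (fun i hi => by linarith [hb i hi]) fun i _ => Real.one_sub_le_exp_neg _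

lemma tendsto_sum_Ioc_atTop {b : ℕ → ℝ}
    (hb : Tendsto (fun k => ∑ i ∈ range (k + 1), b i) atTop atTop) (N : ℕ) :
    Tendsto (fun k => ∑ i ∈ Ioc N k, b i) atTop atTop := by
  refine (tendsto_atTop_add_const_left _ (-∑ i ∈ range (N + 1), b i) hb).congr' ?_
  filter_upwards [eventually_ge_atTop N] with k hk
  rw [← sum_range_add_sum_Ico b (by omega : N + 1 ≤ k + 1), Ico_add_one_add_one_eq_Ioc]
  ring

lemma tendsto_prod_Ioc_one_sub_zero {b : ℕ → ℝ} {N : ℕ} (hb : ∀ j, N < j → b j ≤ 1)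
    (hsum : Tendsto (fun k => ∑ i ∈ range (k + 1), b i) atTop atTop) :
    Tendsto (fun k => ∏ j ∈ Ioc N k, (1 - b j)) atTop (𝓝 0) := by
  have hb' : ∀ k, ∀ j ∈ Ioc N k, b j ≤ 1 := fun k j hj => hb j (mem_Ioc.mp hj).1
  refine squeeze_zero (fun k => prod_nonneg fun j hj => sub_nonneg.mpr (hb' k j hj))
    (fun k => prod_one_sub_le_exp_neg_sum _ b (hb' k)) ?_
  exact Real.tendsto_exp_atBot.comp (tendsto_neg_atTop_atBot.comp (tendsto_sum_Ioc_atTop hsum N))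

section ConvexRecurrence

variable {E : Type*} [NormedAddCommGroup E] [NormedSpace ℝ E]
  {β : ℕ → ℝ} {x e : ℕ → E}

lemma norm_sub_le_prod_mul_of_convex_recurrence {N : ℕ} {c : ℝ}
    (hβ : ∀ k, N < k → β k ∈ Set.Icc 0 1) (he : ∀ k, N < k → ‖e k‖ ≤ c)
    (hrec : ∀ k, x (k + 1) = (1 - β (k + 1)) • x k + β (k + 1) • e (k + 1))
    {k : ℕ} (hk : N ≤ k) :
    ‖x k‖ - c ≤ (∏ j ∈ Ioc N k, (1 - β j)) * (‖x N‖ - c) := by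
  induction k, hk using Nat.le_induction with
  | base => simp
  | succ k hk ih =>
    obtain ⟨hβ0, hβ1⟩ := hβ (k + 1) (by omega)
    have hstep : ‖x (k + 1)‖ ≤ (1 - β (k + 1)) * ‖x k‖ + β (k + 1) * c := by
      rw [hrec]
      refine (norm_add_le _ _).trans ?_
      rw [norm_smul, norm_smul, Real.norm_of_nonneg (sub_nonneg.mpr hβ1),
        Real.norm_of_nonneg hβ0]
      gcongr
      exact he (k + 1) (by omega)
    rw [prod_Ioc_succ_top hk]
    nlinarith [mul_le_mul_of_nonneg_right ih (sub_nonneg.mpr hβ1)]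

theorem tendsto_zero_of_convex_recurrence
    (hβ : ∀ᶠ k in atTop, β k ∈ Set.Icc 0 1)
    (hsum : Tendsto (fun k => ∑ i ∈ range (k + 1), β i) atTop atTop)
    (he : Tendsto e atTop (𝓝 0))
    (hrec : ∀ k, x (k + 1) = (1 - β (k + 1)) • x k + β (k + 1) • e (k + 1)) :
    Tendsto x atTop (𝓝 0) := by
  rw [NormedAddGroup.tendsto_nhds_zero] at he ⊢
  intro ε hε
  obtain ⟨N, hN⟩ := (hβ.and (he (ε / 2) (half_pos hε))).exists_forall_of_atTop
  have hprod : Tendsto (fun k => (∏ j ∈ Ioc N k, (1 - β j)) * (‖x N‖ - ε / 2))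
      atTop (𝓝 0) := by
    simpa using (tendsto_prod_Ioc_one_sub_zero (fun j hj => (hN j hj.le).1.2) hsum).mul_const
      (‖x N‖ - ε / 2)
  filter_upwards [hprod.eventually_lt_const (half_pos hε), eventually_ge_atTop N]
    with k hsmall hk
  have := norm_sub_le_prod_mul_of_convex_recurrence (fun j hj => (hN j hj.le).1)
    (fun j hj => (hN j hj.le).2.le) hrec hk
  linarith

end ConvexRecurrence

noncomputable def toeplitzAverage (β e : ℕ → ℝ) (a : ℝ) (k : ℕ) : ℝ :=
  (∑ i ∈ range (k + 1), (∏ j ∈ Ioc i k, (1 - β j)) * β i * e i)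
    + a * ∏ j ∈ range (k + 1), (1 - β j)

lemma toeplitzAverage_succ (β e : ℕ → ℝ) (a : ℝ) (k : ℕ) :
    toeplitzAverage β e a (k + 1)
      = (1 - β (k + 1)) * toeplitzAverage β e a k + β (k + 1) * e (k + 1) := by
  have hsplit : ∀ i ∈ range (k + 1), (∏ j ∈ Ioc i (k + 1), (1 - β j)) * β i * e i
      = (1 - β (k + 1)) * ((∏ j ∈ Ioc i k, (1 - β j)) * β i * e i) := fun i hi => by
    rw [prod_Ioc_succ_top (mem_range_succ_iff.mp hi)]
    ring
  rw [toeplitzAverage, toeplitzAverage, sum_range_succ, sum_congr rfl hsplit, ← mul_sum,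
    prod_range_succ, Ioc_self, prod_empty]
  ring

/-- Toeplitz-type averaging lemma. If `β_k ≥ 0`, `β_k → 0`, `∑ β_k = ∞`, then for any
real `a` and any sequence `e_k → 0`, the sequence
`S_k = ∑_{i=0}^{k} (∏_{j=i+1}^{k} (1 − β_j)) β_i e_i + a ∏_{j=0}^{k} (1 − β_j)`
converges to `0`. -/
theorem toeplitz_averaging (β : ℕ → ℝ) (hβ0 : ∀ k, 0 ≤ β k)
    (hβlim : Tendsto β atTop (nhds 0))
    (hβsum : Tendsto (fun k => ∑ i ∈ Finset.range (k + 1), β i) atTop atTop)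
    (a : ℝ) (e : ℕ → ℝ) (he : Tendsto e atTop (nhds 0)) :
    Tendsto (fun k =>
        (∑ i ∈ Finset.range (k + 1),
          (∏ j ∈ Finset.Ioc i k, (1 - β j)) * β i * e i)
        + a * ∏ j ∈ Finset.range (k + 1), (1 - β j))
      atTop (nhds 0) := by
  have hβ : ∀ᶠ k in atTop, β k ∈ Set.Icc 0 1 :=
    (hβlim.eventually_le_const zero_lt_one).mono fun k hk => ⟨hβ0 k, hk⟩
  exact tendsto_zero_of_convex_recurrence (x := toeplitzAverage β e a) hβ hβsum he fun k => by
    simpa only [smul_eq_mul] using toeplitzAverage_succ β e a k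
end

section
/- Let x* ∈ ℝ^d with ℓ ≤ x* ≤ u, and let 0 < ε ≤ ½·min{(u−ℓ)ᵢ for i ∈ A*, (x*−ℓ)ⱼ and (u−x*)ⱼ for j ∉ A*}, where A* = A_ℓ(x*) ∪ A_u(x*) with A_ℓ(x*) = {i : x*ᵢ = ℓᵢ}, A_u(x*) = {i : x*ᵢ = uᵢ}. If x ∈ ℝ^d satisfies max_i |xᵢ − x*ᵢ| ≤ ε/2, then the estimated active sets A_ℓ(x;ε) = {i : xᵢ − ℓᵢ ≤ ε} and A_u(x;ε) = {i : uᵢ − xᵢ ≤ ε} satisfy A_ℓ(x;ε) = A_ℓ(x*) and A_u(x;ε) = A_u(x*). -/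
/-- Active-set identification. Let `ℓ ≤ x⋆ ≤ u`, with active sets
`A_ℓ(x⋆) = {i : x⋆ᵢ = ℓᵢ}`, `A_u(x⋆) = {i : x⋆ᵢ = uᵢ}`, `A⋆ = A_ℓ(x⋆) ∪ A_u(x⋆)`.
Suppose `0 < ε` and `ε ≤ ½ (u−ℓ)ᵢ` for `i ∈ A⋆`, `ε ≤ ½ (x⋆−ℓ)ⱼ` and `ε ≤ ½ (u−x⋆)ⱼ`
for `j ∉ A⋆`. If `|xᵢ − x⋆ᵢ| ≤ ε/2` for all `i`, then the estimated active sets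
`A_ℓ(x;ε) = {i : xᵢ − ℓᵢ ≤ ε}` and `A_u(x;ε) = {i : uᵢ − xᵢ ≤ ε}` coincide with
`A_ℓ(x⋆)` and `A_u(x⋆)`. -/
theorem active_set_identification {d : ℕ} (ℓ u xstar x : Fin d → ℝ)
    (h1 : ℓ ≤ xstar) (h2 : xstar ≤ u) (ε : ℝ) (hε : 0 < ε)
    (hεA : ∀ i, (xstar i = ℓ i ∨ xstar i = u i) → ε ≤ (u i - ℓ i) / 2)
    (hεI : ∀ j, ¬(xstar j = ℓ j ∨ xstar j = u j) →
      ε ≤ (xstar j - ℓ j) / 2 ∧ ε ≤ (u j - xstar j) / 2)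
    (hx : ∀ i, |x i - xstar i| ≤ ε / 2) :
    {i | x i - ℓ i ≤ ε} = {i | xstar i = ℓ i} ∧
    {i | u i - x i ≤ ε} = {i | xstar i = u i} := by
  constructor <;> ext i <;> simp only [Set.mem_setOf_eq] <;>
    obtain ⟨hx1, hx2⟩ := abs_le.mp (hx i) <;> constructor <;> intro h
  · by_cases hA : xstar i = ℓ i ∨ xstar i = u i
    · rcases hA with hA | hA
      · exact hA
      · have := hεA i (Or.inr hA); linarith
    · have := (hεI i hA).1; linarith
  · linarith
  · by_cases hA : xstar i = ℓ i ∨ xstar i = u i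
    · rcases hA with hA | hA
      · have := hεA i (Or.inl hA); linarith
      · exact hA
    · have := (hεI i hA).2; linarith
  · linarith
end

section
/- Let (ξ_k) be a sequence of random vectors in ℝ^d adapted to a filtration (F_k) with E[ξ_k | F_{k−1}] = 0 and E[‖ξ_k‖² | F_{k−1}] ≤ σ² almost surely. Define the weighted sum W_k = ∑_{i=0}^{k} (∏_{j=i+1}^{k} (1−β_j)) β_i ξ_i, where β_k = ι₂(k+1)^{−b₂} with ι₂ > 0 and b₂ ∈ (1/2, 1]. Then W_k → 0 almost surely as k → ∞. -/
/-!
The partial sums `S_k = ∑_{i ≤ k} β_i ξ_i` form a martingale whose second moments are bounded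
by `σ² ∑ β_i² < ∞`, so they converge almost surely, say to `L`. On such a path `W_k` vanishes
for deterministic reasons: with the tails `R_k = L - S_k → 0`, the sequence `V_k = W_k + R_k`
obeys `V_{k+1} = (1 - β_{k+1}) V_k + β_{k+1} R_k`, and since `∑ β = ∞` this averaging of a
vanishing input tends to `0`; hence so does `W_k = V_k - R_k`.
-/

open MeasureTheory Filter Finset Topology

lemma tendsto_prod_Ioc_one_sub_of_tendsto_sum {β : ℕ → ℝ} {N : ℕ} (hβ : ∀ j, N < j → β j ≤ 1)
    (hsum : Tendsto (fun k => ∑ j ∈ range k, β j) atTop atTop) :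
    Tendsto (fun k => ∏ j ∈ Ioc N k, (1 - β j)) atTop (𝓝 0) := by
  have hsum_Ioc : Tendsto (fun k => ∑ j ∈ Ioc N k, β j) atTop atTop := by
    refine (tendsto_atTop_add_const_left _ (-∑ j ∈ range (N + 1), β j)
      (hsum.comp (tendsto_add_atTop_nat 1))).congr' ?_
    filter_upwards [eventually_ge_atTop N] with k hk
    rw [Function.comp_apply, ← sum_range_add_sum_Ico _ (by omega : N + 1 ≤ k + 1),
      Ico_add_one_add_one_eq_Ioc]
    ring
  have hfactor : ∀ k, ∀ j ∈ Ioc N k, 0 ≤ 1 - β j := fun k j hj =>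
    sub_nonneg.2 (hβ j (mem_Ioc.1 hj).1)
  refine squeeze_zero (fun k => prod_nonneg (hfactor k)) (fun k => ?_)
    (Real.tendsto_exp_atBot.comp (tendsto_neg_atTop_atBot.comp hsum_Ioc))
  calc ∏ j ∈ Ioc N k, (1 - β j) ≤ ∏ j ∈ Ioc N k, Real.exp (-β j) :=
        prod_le_prod (hfactor k) fun j _ => Real.one_sub_le_exp_neg _
    _ = Real.exp (-∑ j ∈ Ioc N k, β j) := by rw [← Real.exp_sum, sum_neg_distrib]

lemma le_prod_Ioc_one_sub_mul {β c : ℕ → ℝ} {N : ℕ} (hβ : ∀ k, N ≤ k → β (k + 1) ≤ 1)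
    (hc : ∀ k, N ≤ k → c (k + 1) ≤ (1 - β (k + 1)) * c k) :
    ∀ k, N ≤ k → c k ≤ (∏ j ∈ Ioc N k, (1 - β j)) * c N := by
  intro k hk
  induction k, hk using Nat.le_induction with
  | base => simp
  | succ k hk ih =>
    calc c (k + 1) ≤ (1 - β (k + 1)) * c k := hc k hk
      _ ≤ (1 - β (k + 1)) * ((∏ j ∈ Ioc N k, (1 - β j)) * c N) :=
          mul_le_mul_of_nonneg_left ih (sub_nonneg.2 (hβ k hk))
      _ = (∏ j ∈ Ioc N (k + 1), (1 - β j)) * c N := by rw [prod_Ioc_succ_top hk]; ring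

lemma tendsto_zero_of_le_one_sub_mul_add {β a e : ℕ → ℝ}
    (hβ : ∀ᶠ k in atTop, 0 ≤ β k ∧ β k ≤ 1)
    (hsum : Tendsto (fun k => ∑ j ∈ range k, β j) atTop atTop) (he : Tendsto e atTop (𝓝 0))
    (ha : ∀ k, 0 ≤ a k)
    (hrec : ∀ᶠ k in atTop, a (k + 1) ≤ (1 - β (k + 1)) * a k + β (k + 1) * e k) :
    Tendsto a atTop (𝓝 0) := by
  refine tendsto_order.2 ⟨fun ε hε => Eventually.of_forall fun k => hε.trans_le (ha k),
    fun ε hε => ?_⟩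
  obtain ⟨N, hN⟩ := eventually_atTop.1 <|
    hβ.and <| hrec.and ((tendsto_order.1 he).2 (ε / 2) (half_pos hε))
  -- `a - ε / 2` contracts by the factor `1 - β (k + 1)` at every step after `N`.
  have hcontract := le_prod_Ioc_one_sub_mul (β := β) (c := fun k => a k - ε / 2) (N := N)
    (fun k hk => (hN (k + 1) (by omega)).1.2) fun k hk => by
      have hβ0 := (hN (k + 1) (by omega)).1.1
      obtain ⟨-, hrec, he⟩ := hN k hk
      nlinarith
  have hprod := tendsto_prod_Ioc_one_sub_of_tendsto_sum (fun j hj => (hN j hj.le).1.2) hsum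
  filter_upwards [eventually_ge_atTop N,
    (tendsto_order.1 (hprod.mul_const (a N - ε / 2))).2 (ε / 2) (by simpa using half_pos hε)]
    with k hk hsmall
  linarith [hcontract k hk]

def dampedSum {R E : Type*} [CommRing R] [AddCommGroup E] [Module R E] (β : ℕ → R) (x : ℕ → E)
    (k : ℕ) : E :=
  ∑ i ∈ range (k + 1), (∏ j ∈ Ioc i k, (1 - β j)) • x i

lemma dampedSum_succ {R E : Type*} [CommRing R] [AddCommGroup E] [Module R E] (β : ℕ → R)
    (x : ℕ → E) (k : ℕ) :
    dampedSum β x (k + 1) = (1 - β (k + 1)) • dampedSum β x k + x (k + 1) := by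
  rw [dampedSum, sum_range_succ, Ioc_self, prod_empty, one_smul, dampedSum, smul_sum]
  congr 1
  refine sum_congr rfl fun i hi => ?_
  rw [prod_Ioc_succ_top (by simpa [Nat.lt_succ_iff] using hi), mul_comm, mul_smul]

theorem tendsto_dampedSum_zero {E : Type*} [NormedAddCommGroup E] [NormedSpace ℝ E]
    {β : ℕ → ℝ} {x : ℕ → E} {L : E} (hβ : ∀ᶠ k in atTop, 0 ≤ β k ∧ β k ≤ 1)
    (hsum : Tendsto (fun k => ∑ j ∈ range k, β j) atTop atTop)
    (hx : Tendsto (fun k => ∑ i ∈ range (k + 1), x i) atTop (𝓝 L)) :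
    Tendsto (dampedSum β x) atTop (𝓝 0) := by
  set r : ℕ → E := fun k => L - ∑ i ∈ range (k + 1), x i
  have hr : Tendsto r atTop (𝓝 0) := by simpa using hx.const_sub L
  set v : ℕ → E := fun k => dampedSum β x k + r k
  have hv_succ : ∀ k, v (k + 1) = (1 - β (k + 1)) • v k + β (k + 1) • r k := by
    intro k
    simp only [v, r, dampedSum_succ, sum_range_succ _ (k + 1)]
    module
  have hv : Tendsto v atTop (𝓝 0) := by
    refine tendsto_zero_iff_norm_tendsto_zero.2 <| tendsto_zero_of_le_one_sub_mul_add hβ hsum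
      (tendsto_zero_iff_norm_tendsto_zero.1 hr) (fun k => norm_nonneg _) ?_
    filter_upwards [(tendsto_add_atTop_nat 1).eventually hβ] with k ⟨hβ0, hβ1⟩
    rw [hv_succ]
    refine (norm_add_le _ _).trans_eq ?_
    rw [norm_smul, norm_smul, Real.norm_of_nonneg (sub_nonneg.2 hβ1), Real.norm_of_nonneg hβ0]
  simpa [v] using hv.sub hr

section Martingale

variable {Ω : Type*} {m0 : MeasurableSpace Ω} {μ : Measure Ω}

lemma integral_mul_eq_zero_of_condExp_eq_zero {m : MeasurableSpace Ω} (hm : m ≤ m0)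
    [SigmaFinite (μ.trim hm)] {g Y : Ω → ℝ} (hg : StronglyMeasurable[m] g)
    (hgY : Integrable (g * Y) μ) (hY : Integrable Y μ) (hYm : μ[Y | m] =ᵐ[μ] 0) :
    ∫ ω, g ω * Y ω ∂μ = 0 := by
  calc ∫ ω, g ω * Y ω ∂μ = ∫ ω, μ[g * Y | m] ω ∂μ := (integral_condExp hm).symm
    _ = ∫ ω, g ω * 0 ∂μ := by
      refine integral_congr_ae ?_
      filter_upwards [condExp_mul_of_stronglyMeasurable_left hg hgY hY, hYm] with ω h1 h2
      simp [h1, h2]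
    _ = 0 := by simp

lemma integral_le_of_condExp_le_const [IsProbabilityMeasure μ] {m : MeasurableSpace Ω}
    (hm : m ≤ m0) {f : Ω → ℝ} {c : ℝ} (hf : μ[f | m] ≤ᵐ[μ] fun _ => c) : ∫ ω, f ω ∂μ ≤ c := by
  calc ∫ ω, f ω ∂μ = ∫ ω, μ[f | m] ω ∂μ := (integral_condExp hm).symm
    _ ≤ ∫ _, c ∂μ := integral_mono_ae integrable_condExp (integrable_const c) hf
    _ = c := by simp

lemma eLpNorm_one_le_one_add_integral_sq [IsProbabilityMeasure μ] {f : Ω → ℝ}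
    (hf : MemLp f 2 μ) :
    eLpNorm f 1 μ ≤ ENNReal.ofReal (1 + ∫ ω, f ω ^ 2 ∂μ) := by
  rw [eLpNorm_one_eq_lintegral_enorm,
    ← ofReal_integral_norm_eq_lintegral_enorm (hf.integrable one_le_two)]
  refine ENNReal.ofReal_le_ofReal ?_
  calc ∫ ω, ‖f ω‖ ∂μ ≤ ∫ ω, (1 + f ω ^ 2) ∂μ :=
        integral_mono (hf.integrable one_le_two).norm ((integrable_const 1).add hf.integrable_sq)
          fun ω => by nlinarith [sq_abs (f ω), Real.norm_eq_abs (f ω), sq_nonneg (|f ω| - 1)]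
    _ = 1 + ∫ ω, f ω ^ 2 ∂μ := by
        rw [integral_add (integrable_const 1) hf.integrable_sq]
        simp

variable {F : Filtration ℕ m0}

lemma martingale_partialSum {E : Type*} [NormedAddCommGroup E] [NormedSpace ℝ E]
    [CompleteSpace E] [IsFiniteMeasure μ] {X : ℕ → Ω → E} (hX : StronglyAdapted F X)
    (hint : ∀ i, Integrable (X i) μ) (hmean : ∀ n, μ[X (n + 1) | F n] =ᵐ[μ] 0) :
    Martingale (fun n ω => ∑ i ∈ range (n + 1), X i ω) F μ := by
  refine martingale_of_condExp_sub_eq_zero_nat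
    (fun n => Finset.stronglyMeasurable_fun_sum _ fun i hi =>
      (hX i).mono (F.mono (Nat.lt_succ_iff.1 (mem_range.1 hi))))
    (fun n => integrable_finsetSum _ fun i _ => hint i) fun n => ?_
  have hincr : (fun ω => ∑ i ∈ range (n + 1 + 1), X i ω) - (fun ω => ∑ i ∈ range (n + 1), X i ω)
      = X (n + 1) := by
    ext ω
    simp [sum_range_succ _ (n + 1)]
  rw [hincr]
  exact hmean n

lemma integral_sq_partialSum [IsFiniteMeasure μ] {X : ℕ → Ω → ℝ} (hX : StronglyAdapted F X)
    (hL2 : ∀ i, MemLp (X i) 2 μ) (hmean : ∀ n, μ[X (n + 1) | F n] =ᵐ[μ] 0) (n : ℕ) :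
    ∫ ω, (∑ i ∈ range (n + 1), X i ω) ^ 2 ∂μ = ∑ i ∈ range (n + 1), ∫ ω, X i ω ^ 2 ∂μ := by
  induction n with
  | zero => simp
  | succ n ih =>
    set S : Ω → ℝ := fun ω => ∑ i ∈ range (n + 1), X i ω
    have hS : MemLp S 2 μ := memLp_finsetSum _ fun i _ => hL2 i
    have hSX : Integrable (fun ω => S ω * X (n + 1) ω) μ := hS.integrable_mul (hL2 (n + 1))
    have horth : ∫ ω, S ω * X (n + 1) ω ∂μ = 0 :=
      integral_mul_eq_zero_of_condExp_eq_zero (F.le n)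
        ((martingale_partialSum hX (fun i => (hL2 i).integrable one_le_two) hmean).stronglyAdapted
          n)
        hSX ((hL2 (n + 1)).integrable one_le_two) (hmean n)
    calc ∫ ω, (∑ i ∈ range (n + 1 + 1), X i ω) ^ 2 ∂μ
        = ∫ ω, (S ω ^ 2 + (2 * (S ω * X (n + 1) ω) + X (n + 1) ω ^ 2)) ∂μ := by
          congr 1; ext ω; simp only [S, sum_range_succ _ (n + 1)]; ring
      _ = ∫ ω, S ω ^ 2 ∂μ + (2 * ∫ ω, S ω * X (n + 1) ω ∂μ + ∫ ω, X (n + 1) ω ^ 2 ∂μ) := by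
          have hX2 := (hL2 (n + 1)).integrable_sq
          rw [integral_add hS.integrable_sq ((hSX.const_mul 2).fun_add hX2),
            integral_add (hSX.const_mul 2) hX2, integral_const_mul]
      _ = ∑ i ∈ range (n + 1 + 1), ∫ ω, X i ω ^ 2 ∂μ := by
          rw [horth, ih, sum_range_succ _ (n + 1)]; ring

theorem ae_tendsto_partialSum_of_summable_integral_sq [IsProbabilityMeasure μ]
    {X : ℕ → Ω → ℝ} (hX : StronglyAdapted F X) (hL2 : ∀ i, MemLp (X i) 2 μ)
    (hmean : ∀ n, μ[X (n + 1) | F n] =ᵐ[μ] 0) (hsum : Summable fun i => ∫ ω, X i ω ^ 2 ∂μ) :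
    ∀ᵐ ω ∂μ, ∃ L, Tendsto (fun n => ∑ i ∈ range (n + 1), X i ω) atTop (𝓝 L) := by
  refine (martingale_partialSum hX (fun i => (hL2 i).integrable one_le_two) hmean).submartingale
    |>.exists_ae_tendsto_of_bdd (R := (1 + ∑' i, ∫ ω, X i ω ^ 2 ∂μ).toNNReal) fun n => ?_
  refine (eLpNorm_one_le_one_add_integral_sq (memLp_finsetSum _ fun i _ => hL2 i)).trans ?_
  rw [integral_sq_partialSum hX hL2 hmean]
  exact ENNReal.ofReal_le_ofReal <| add_le_add le_rfl
    (hsum.sum_le_tsum _ fun i _ => integral_nonneg fun ω => sq_nonneg _)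

variable {ι : Type*} [Fintype ι]

theorem ae_tendsto_partialSum_of_summable_integral_norm_sq [IsProbabilityMeasure μ]
    {ξ : ℕ → Ω → EuclideanSpace ℝ ι} (hξ : StronglyAdapted F ξ) (hL2 : ∀ i, MemLp (ξ i) 2 μ)
    (hmean : ∀ n, μ[ξ (n + 1) | F n] =ᵐ[μ] 0) (hsum : Summable fun i => ∫ ω, ‖ξ i ω‖ ^ 2 ∂μ) :
    ∀ᵐ ω ∂μ, ∃ L, Tendsto (fun n => ∑ i ∈ range (n + 1), ξ i ω) atTop (𝓝 L) := by
  have hcoord : ∀ l : ι, ∀ᵐ ω ∂μ, ∃ c,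
      Tendsto (fun n => ∑ i ∈ range (n + 1), ξ i ω l) atTop (𝓝 c) := by
    intro l
    set T := EuclideanSpace.proj (𝕜 := ℝ) (ι := ι) l
    refine ae_tendsto_partialSum_of_summable_integral_sq (X := fun i ω => T (ξ i ω))
      (fun i => T.continuous.comp_stronglyMeasurable (hξ i))
      (fun i => (hL2 i).continuousLinearMap_comp T) (fun n => ?_)
      (hsum.of_nonneg_of_le (fun i => integral_nonneg fun ω => sq_nonneg _) fun i => ?_)
    · filter_upwards [T.comp_condExp_comm ((hL2 (n + 1)).integrable one_le_two) (m := F n),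
        hmean n] with ω hT hzero
      rw [← Function.comp_def T, ← hT, Function.comp_apply, hzero, Pi.zero_apply, map_zero,
        Pi.zero_apply]
    · refine integral_mono ((hL2 i).continuousLinearMap_comp T).integrable_sq
        ((hL2 i).integrable_norm_pow' (p := 2)) fun ω => ?_
      simpa [T, Real.norm_eq_abs, sq_abs] using
        pow_le_pow_left₀ (norm_nonneg _) (PiLp.norm_apply_le (ξ i ω) l) 2
  filter_upwards [ae_all_iff.2 hcoord] with ω hω
  choose c hc using hω
  refine ⟨WithLp.toLp 2 c,
    (((PiLp.continuous_toLp 2 _).tendsto c).comp (tendsto_pi_nhds.2 hc)).congr fun n => ?_⟩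
  ext l
  simp

theorem ae_tendsto_partialSum_smul_of_integral_norm_sq_le [IsProbabilityMeasure μ]
    {ξ : ℕ → Ω → EuclideanSpace ℝ ι} (hξ : StronglyAdapted F ξ) (hL2 : ∀ i, MemLp (ξ i) 2 μ)
    (hmean : ∀ n, μ[ξ (n + 1) | F n] =ᵐ[μ] 0) {σ : ℝ} (hvar : ∀ i, ∫ ω, ‖ξ i ω‖ ^ 2 ∂μ ≤ σ ^ 2)
    {c : ℕ → ℝ} (hc : Summable fun i => c i ^ 2) :
    ∀ᵐ ω ∂μ, ∃ L, Tendsto (fun n => ∑ i ∈ range (n + 1), c i • ξ i ω) atTop (𝓝 L) := by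
  refine ae_tendsto_partialSum_of_summable_integral_norm_sq (ξ := fun i ω => c i • ξ i ω)
    (fun i => (hξ i).const_smul (c i)) (fun i => (hL2 i).const_smul (c i)) (fun n => ?_)
    ((hc.mul_right (σ ^ 2)).of_nonneg_of_le (fun i => integral_nonneg fun ω => sq_nonneg _)
      fun i => ?_)
  · filter_upwards [condExp_smul (c (n + 1)) (ξ (n + 1)) (F n), hmean n] with ω h1 h2
    simp [← Pi.smul_def, h1, h2]
  · simp_rw [norm_smul, mul_pow, integral_const_mul, Real.norm_eq_abs, sq_abs]
    exact mul_le_mul_of_nonneg_left (hvar i) (sq_nonneg _)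

end Martingale

lemma summable_nat_add_one_rpow {p : ℝ} :
    Summable (fun n : ℕ => ((n : ℝ) + 1) ^ p) ↔ p < -1 := by
  simpa [Real.summable_nat_rpow] using summable_nat_add_iff (f := fun n : ℕ => (n : ℝ) ^ p) 1

lemma summable_sq_const_mul_nat_add_one_rpow_neg (a : ℝ) {b : ℝ} (hb : 1 / 2 < b) :
    Summable fun n : ℕ => (a * ((n : ℝ) + 1) ^ (-b)) ^ 2 := by
  refine (summable_nat_add_one_rpow.2 (by linarith : -b * 2 < -1)).mul_left (a ^ 2) |>.congr
    fun n => ?_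
  rw [mul_pow, Real.rpow_mul (by positivity), Real.rpow_two]

lemma tendsto_sum_const_mul_nat_add_one_rpow_neg {a b : ℝ} (ha : 0 < a) (hb : b ≤ 1) :
    Tendsto (fun k => ∑ n ∈ range k, a * ((n : ℝ) + 1) ^ (-b)) atTop atTop := by
  refine (not_summable_iff_tendsto_nat_atTop_of_nonneg fun n => by positivity).1 ?_
  rw [summable_mul_left_iff ha.ne', summable_nat_add_one_rpow]
  linarith

theorem momentum_noise_vanishes_as_general {d : ℕ}
    {Ωs : Type*} {mΩ : MeasurableSpace Ωs} {μ : Measure Ωs} [IsProbabilityMeasure μ]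
    (F : Filtration ℕ mΩ)
    (ξ : ℕ → Ωs → EuclideanSpace ℝ (Fin d))
    (hadapted : Adapted F ξ)
    (hint2 : ∀ k, Integrable (fun ω => ‖ξ k ω‖ ^ 2) μ)
    (σ : ℝ)
    (hmean : ∀ k, μ[ξ (k + 1) | F k] =ᵐ[μ] 0)
    (hvar0 : ∫ ω, ‖ξ 0 ω‖ ^ 2 ∂μ ≤ σ ^ 2)
    (hvar : ∀ k, μ[fun ω => ‖ξ (k + 1) ω‖ ^ 2 | F k] ≤ᵐ[μ] fun _ => σ ^ 2)
    (ι₂ b₂ : ℝ) (hι₂ : 0 < ι₂) (hb₂ : b₂ ∈ Set.Ioc (1 / 2 : ℝ) 1)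
    (β : ℕ → ℝ) (hβ : ∀ k, β k = ι₂ * ((k : ℝ) + 1) ^ (-b₂)) :
    ∀ᵐ ω ∂μ, Tendsto
      (fun k => ∑ i ∈ Finset.range (k + 1),
        ((∏ j ∈ Finset.Ioc i k, (1 - β j)) * β i) • ξ i ω)
      atTop (nhds 0) := by
  have hβ_nonneg : ∀ k, 0 ≤ β k := fun k => by rw [hβ]; positivity
  have hβ_sq : Summable fun k => β k ^ 2 := by
    simpa only [hβ] using summable_sq_const_mul_nat_add_one_rpow_neg ι₂ hb₂.1
  have hβ_div : Tendsto (fun k => ∑ j ∈ range k, β j) atTop atTop := by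
    simpa only [hβ] using tendsto_sum_const_mul_nat_add_one_rpow_neg hι₂ hb₂.2
  have hβ_unit : ∀ᶠ k in atTop, 0 ≤ β k ∧ β k ≤ 1 :=
    (hβ_sq.tendsto_atTop_zero.eventually (gt_mem_nhds one_pos)).mono fun k hk =>
      ⟨hβ_nonneg k, by nlinarith [hβ_nonneg k]⟩
  have hL2 : ∀ k, MemLp (ξ k) 2 μ := fun k =>
    (memLp_two_iff_integrable_sq_norm
      ((hadapted k).stronglyMeasurable.mono (F.le k)).aestronglyMeasurable).2 (hint2 k)
  have hξ_var : ∀ k, ∫ ω, ‖ξ k ω‖ ^ 2 ∂μ ≤ σ ^ 2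
    | 0 => hvar0
    | k + 1 => integral_le_of_condExp_le_const (F.le k) (hvar k)
  filter_upwards [ae_tendsto_partialSum_smul_of_integral_norm_sq_le hadapted.stronglyAdapted hL2
    hmean hξ_var hβ_sq] with ω ⟨L, hL⟩
  exact (tendsto_dampedSum_zero hβ_unit hβ_div hL).congr fun k => by
    simp only [dampedSum, mul_smul]

/-- Almost-sure convergence of the momentum averaging of martingale-difference noise.
Let `(ξ_k)` be adapted to a filtration `(F_k)` with `E[ξ_{k+1} | F_k] = 0` (and
`E[ξ_0] = 0`), and conditional second moments bounded by `σ²`. With weights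
`β_k = ι₂ (k+1)^{−b₂}`, `ι₂ > 0`, `b₂ ∈ (1/2, 1]`, the weighted sum
`W_k = ∑_{i=0}^{k} (∏_{j=i+1}^{k} (1−β_j)) β_i ξ_i` converges to `0` almost surely. -/
theorem momentum_noise_vanishes_as {d : ℕ}
    {Ωs : Type*} {mΩ : MeasurableSpace Ωs} {μ : Measure Ωs} [IsProbabilityMeasure μ]
    (F : Filtration ℕ mΩ)
    (ξ : ℕ → Ωs → EuclideanSpace ℝ (Fin d))
    (hadapted : Adapted F ξ)
    (hint : ∀ k, Integrable (ξ k) μ)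
    (hint2 : ∀ k, Integrable (fun ω => ‖ξ k ω‖ ^ 2) μ)
    (σ : ℝ)
    (hmean0 : ∫ ω, ξ 0 ω ∂μ = 0)
    (hmean : ∀ k, μ[ξ (k + 1) | F k] =ᵐ[μ] 0)
    (hvar0 : ∫ ω, ‖ξ 0 ω‖ ^ 2 ∂μ ≤ σ ^ 2)
    (hvar : ∀ k, μ[fun ω => ‖ξ (k + 1) ω‖ ^ 2 | F k] ≤ᵐ[μ] fun _ => σ ^ 2)
    (ι₂ b₂ : ℝ) (hι₂ : 0 < ι₂) (hb₂ : b₂ ∈ Set.Ioc (1 / 2 : ℝ) 1)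
    (β : ℕ → ℝ) (hβ : ∀ k, β k = ι₂ * ((k : ℝ) + 1) ^ (-b₂)) :
    ∀ᵐ ω ∂μ, Tendsto
      (fun k => ∑ i ∈ Finset.range (k + 1),
        ((∏ j ∈ Finset.Ioc i k, (1 - β j)) * β i) • ξ i ω)
      atTop (nhds 0) :=
  momentum_noise_vanishes_as_general F ξ hadapted hint2 σ hmean hvar0 hvar ι₂ b₂ hι₂ hb₂ β hβ
end

section
/- Let B ∈ ℝ^{d×d} satisfy κ₁ I ⪯ B ⪯ κ₂ I with 0 < κ₁ ≤ κ₂, and suppose (Δx, λ, μ₁, μ₂) satisfies the KKT conditions of the quadratic subproblem: ∇f + B·Δx + ∇cᵀλ − μ₁ + μ₂ = 0; θ c + ∇c·Δx = 0; ℓ ≤ x + Δx ≤ u; μ₁, μ₂ ≥ 0; μ₁ᵀ(ℓ − x − Δx) = 0; μ₂ᵀ(x + Δx − u) = 0, where ℓ ≤ x ≤ u and θ ∈ [0,1]. Then ∇fᵀΔx + ΔxᵀBΔx ≤ ‖λ‖·‖c‖. -/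
open Matrix

/-- Bound from the KKT conditions of the SQP subproblem. Suppose
`κ₁ I ⪯ B ⪯ κ₂ I` with `0 < κ₁ ≤ κ₂`, and `(Δx, λ, μ₁, μ₂)` satisfies
stationarity `∇f + B Δx + ∇cᵀ λ − μ₁ + μ₂ = 0`, linearized feasibility
`θ c + ∇c Δx = 0`, `ℓ ≤ x + Δx ≤ u`, `μ₁, μ₂ ≥ 0`, and complementarity
`μ₁ᵀ(ℓ − x − Δx) = 0`, `μ₂ᵀ(x + Δx − u) = 0`, where `ℓ ≤ x ≤ u` and `θ ∈ [0,1]`.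
Then `∇fᵀ Δx + Δxᵀ B Δx ≤ ‖λ‖ ‖c‖` (Euclidean norms `‖v‖ = √(v ⬝ v)`). -/
theorem sqp_subproblem_direction_bound {d m : ℕ}
    (B : Matrix (Fin d) (Fin d) ℝ) (κ₁ κ₂ : ℝ) (hκ₁ : 0 < κ₁) (hκ₁₂ : κ₁ ≤ κ₂)
    (hBlow : ∀ z : Fin d → ℝ, κ₁ * (z ⬝ᵥ z) ≤ z ⬝ᵥ B.mulVec z)
    (hBup : ∀ z : Fin d → ℝ, z ⬝ᵥ B.mulVec z ≤ κ₂ * (z ⬝ᵥ z))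
    (gradf : Fin d → ℝ) (c : Fin m → ℝ) (Jc : Matrix (Fin m) (Fin d) ℝ)
    (x ℓ u Δx : Fin d → ℝ) (lam : Fin m → ℝ) (μ₁ μ₂ : Fin d → ℝ)
    (θ : ℝ) (hθ : θ ∈ Set.Icc (0 : ℝ) 1)
    (hx1 : ℓ ≤ x) (hx2 : x ≤ u)
    (hstat : gradf + B.mulVec Δx + Jc.transpose.mulVec lam - μ₁ + μ₂ = 0)
    (hlin : θ • c + Jc.mulVec Δx = 0)
    (hbox1 : ℓ ≤ x + Δx) (hbox2 : x + Δx ≤ u)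
    (hμ₁ : 0 ≤ μ₁) (hμ₂ : 0 ≤ μ₂)
    (hcomp1 : μ₁ ⬝ᵥ (ℓ - x - Δx) = 0) (hcomp2 : μ₂ ⬝ᵥ (x + Δx - u) = 0) :
    gradf ⬝ᵥ Δx + Δx ⬝ᵥ B.mulVec Δx ≤
      Real.sqrt (lam ⬝ᵥ lam) * Real.sqrt (c ⬝ᵥ c) := by
  -- dot stationarity with Δx
  have hdot : gradf ⬝ᵥ Δx + Δx ⬝ᵥ B.mulVec Δx + Jc.transpose.mulVec lam ⬝ᵥ Δx
      - μ₁ ⬝ᵥ Δx + μ₂ ⬝ᵥ Δx = 0 := by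
    have := congrArg (· ⬝ᵥ Δx) hstat
    simpa [add_dotProduct, sub_dotProduct, zero_dotProduct,
      dotProduct_comm (B.mulVec Δx)] using this
  -- Jcᵀ λ ⬝ Δx = λ ⬝ (Jc Δx) = -θ (λ ⬝ c)
  have hJ : Jc.transpose.mulVec lam ⬝ᵥ Δx = -(θ * (lam ⬝ᵥ c)) := by
    have h1 : Jc.mulVec Δx = -(θ • c) := by
      have h := congrArg (fun v => v - θ • c) hlin
      simpa [add_sub_cancel_left] using h
    rw [dotProduct_comm, dotProduct_mulVec, vecMul_transpose, h1]
    simp [neg_dotProduct, smul_dotProduct, dotProduct_comm c lam, smul_eq_mul]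
  -- μ₁ ⬝ Δx ≤ 0
  have hμ1Δ : μ₁ ⬝ᵥ Δx ≤ 0 := by
    have e1 : μ₁ ⬝ᵥ ℓ - μ₁ ⬝ᵥ x - μ₁ ⬝ᵥ Δx = 0 := by
      simpa [dotProduct_sub] using hcomp1
    have h2 : μ₁ ⬝ᵥ (ℓ - x) ≤ 0 := by
      apply Finset.sum_nonpos
      intro i _
      have ha : (0:ℝ) ≤ μ₁ i := hμ₁ i
      have hb : ℓ i ≤ x i := hx1 i
      simp only [Pi.sub_apply]
      nlinarith
    rw [dotProduct_sub] at h2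
    linarith
  -- μ₂ ⬝ Δx ≥ 0
  have hμ2Δ : 0 ≤ μ₂ ⬝ᵥ Δx := by
    have e1 : μ₂ ⬝ᵥ x + μ₂ ⬝ᵥ Δx - μ₂ ⬝ᵥ u = 0 := by
      simpa [dotProduct_sub, dotProduct_add] using hcomp2
    have h2 : 0 ≤ μ₂ ⬝ᵥ (u - x) := by
      apply Finset.sum_nonneg
      intro i _
      have ha : (0:ℝ) ≤ μ₂ i := hμ₂ i
      have hb : x i ≤ u i := hx2 i
      simp only [Pi.sub_apply]
      nlinarith
    rw [dotProduct_sub] at h2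
    linarith
  -- so LHS = θ λ⬝c + μ₁⬝Δx - μ₂⬝Δx ≤ θ λ⬝c
  have key : gradf ⬝ᵥ Δx + Δx ⬝ᵥ B.mulVec Δx ≤ θ * (lam ⬝ᵥ c) := by
    rw [hJ] at hdot; linarith
  -- Cauchy-Schwarz
  have hCS : lam ⬝ᵥ c ≤ Real.sqrt (lam ⬝ᵥ lam) * Real.sqrt (c ⬝ᵥ c) := by
    have := Real.sum_mul_le_sqrt_mul_sqrt Finset.univ lam c
    simpa [dotProduct, sq] using this
  obtain ⟨hθ0, hθ1⟩ := hθ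
  have hRHS : 0 ≤ Real.sqrt (lam ⬝ᵥ lam) * Real.sqrt (c ⬝ᵥ c) :=
    mul_nonneg (Real.sqrt_nonneg _) (Real.sqrt_nonneg _)
  calc gradf ⬝ᵥ Δx + Δx ⬝ᵥ B.mulVec Δx ≤ θ * (lam ⬝ᵥ c) := key
    _ ≤ Real.sqrt (lam ⬝ᵥ lam) * Real.sqrt (c ⬝ᵥ c) := by
        rcases le_or_gt (lam ⬝ᵥ c) 0 with h | h
        · nlinarith
        · nlinarith
end

section
/- Under the setting of the previous item, if additionally ‖λ‖ ≤ M and ρ ≥ M/((1−ν)τθ̄) for some ν ∈ (0,1), τθ̄ ∈ (0,1] with θ ≥ τθ̄, then the local merit-model reduction Δφ = −∇fᵀΔx − ½ ΔxᵀBΔx + ρθ‖c‖ satisfies Δφ ≥ ½ ΔxᵀBΔx + νρθ‖c‖. -/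
open Matrix

/-!
Dotting the stationarity condition with `Δx` and using the linearized constraint
`∇c Δx = -θ c` gives `∇fᵀΔx + ΔxᵀBΔx = θ λᵀc + μ₁ᵀΔx - μ₂ᵀΔx`. By complementarity and
feasibility of `x` the bound multipliers contribute with a favourable sign, so by Cauchy–Schwarz
`∇fᵀΔx + ΔxᵀBΔx ≤ θ M ‖c‖`, and the choice of `ρ` makes this at most `(1 - ν) ρ θ ‖c‖`.
-/

section KKT

variable {ι κ R : Type*} [Fintype ι] [Fintype κ] [CommRing R]

theorem dotProduct_add_dotProduct_mulVec_eq_of_stationary {g Δx μ₁ μ₂ : ι → R}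
    {B : Matrix ι ι R} {J : Matrix κ ι R} {lam c : κ → R} {θ : R}
    (hstat : g + B *ᵥ Δx + Jᵀ *ᵥ lam - μ₁ + μ₂ = 0) (hlin : θ • c + J *ᵥ Δx = 0) :
    g ⬝ᵥ Δx + Δx ⬝ᵥ B *ᵥ Δx = θ * (lam ⬝ᵥ c) + μ₁ ⬝ᵥ Δx - μ₂ ⬝ᵥ Δx := by
  have hJ : J *ᵥ Δx = -(θ • c) := eq_neg_of_add_eq_zero_right hlin
  have hlam : (Jᵀ *ᵥ lam) ⬝ᵥ Δx = -(θ * (lam ⬝ᵥ c)) := by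
    rw [mulVec_transpose, ← dotProduct_mulVec, hJ, dotProduct_neg, dotProduct_smul, smul_eq_mul]
  have h := congrArg (· ⬝ᵥ Δx) hstat
  simp only [add_dotProduct, sub_dotProduct, zero_dotProduct, hlam] at h
  rw [dotProduct_comm Δx]
  linear_combination h

variable [PartialOrder R] [IsOrderedRing R]

theorem dotProduct_nonpos_of_lower_complementarity {μ ℓ x Δx : ι → R} (hμ : 0 ≤ μ)
    (hx : ℓ ≤ x) (hcomp : μ ⬝ᵥ (ℓ - x - Δx) = 0) : μ ⬝ᵥ Δx ≤ 0 := by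
  rw [dotProduct_sub, sub_eq_zero] at hcomp
  rw [← hcomp, ← dotProduct_zero μ]
  exact dotProduct_le_dotProduct_of_nonneg_left (sub_nonpos.mpr hx) hμ

theorem dotProduct_nonneg_of_upper_complementarity {μ x u Δx : ι → R} (hμ : 0 ≤ μ)
    (hx : x ≤ u) (hcomp : μ ⬝ᵥ (x + Δx - u) = 0) : 0 ≤ μ ⬝ᵥ Δx := by
  rw [show x + Δx - u = Δx - (u - x) by abel, dotProduct_sub, sub_eq_zero] at hcomp
  rw [hcomp]
  exact dotProduct_nonneg_of_nonneg hμ (sub_nonneg.mpr hx)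

end KKT

theorem dotProduct_le_sqrt_mul_sqrt {ι : Type*} [Fintype ι] (v w : ι → ℝ) :
    v ⬝ᵥ w ≤ √(v ⬝ᵥ v) * √(w ⬝ᵥ w) := by
  simpa only [dotProduct, sq] using Real.sum_mul_le_sqrt_mul_sqrt Finset.univ v w

theorem le_one_sub_mul_of_div_le {M ν τ ρ : ℝ} (hM : 0 ≤ M) (hν : ν < 1) (hτ : 0 < τ)
    (hτ₁ : τ ≤ 1) (hρ : M / ((1 - ν) * τ) ≤ ρ) : M ≤ (1 - ν) * ρ := by
  have hpos : 0 < (1 - ν) * τ := mul_pos (sub_pos.mpr hν) hτ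
  have hρ₀ : 0 ≤ (1 - ν) * ρ := mul_nonneg (sub_pos.mpr hν).le ((div_nonneg hM hpos.le).trans hρ)
  calc M ≤ ρ * ((1 - ν) * τ) := (div_le_iff₀ hpos).mp hρ
    _ = (1 - ν) * ρ * τ := by ring
    _ ≤ (1 - ν) * ρ := mul_le_of_le_one_right hρ₀ hτ₁

theorem merit_model_reduction_general {d m : ℕ}
    (B : Matrix (Fin d) (Fin d) ℝ)
    (gradf : Fin d → ℝ) (c : Fin m → ℝ) (Jc : Matrix (Fin m) (Fin d) ℝ)
    (x ℓ u Δx : Fin d → ℝ) (lam : Fin m → ℝ) (μ₁ μ₂ : Fin d → ℝ)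
    (θ : ℝ) (hθ : θ ∈ Set.Icc (0 : ℝ) 1)
    (hx1 : ℓ ≤ x) (hx2 : x ≤ u)
    (hstat : gradf + B.mulVec Δx + Jc.transpose.mulVec lam - μ₁ + μ₂ = 0)
    (hlin : θ • c + Jc.mulVec Δx = 0)
    (hμ₁ : 0 ≤ μ₁) (hμ₂ : 0 ≤ μ₂)
    (hcomp1 : μ₁ ⬝ᵥ (ℓ - x - Δx) = 0) (hcomp2 : μ₂ ⬝ᵥ (x + Δx - u) = 0)
    (M ν τθbar ρ : ℝ)
    (hM : Real.sqrt (lam ⬝ᵥ lam) ≤ M)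
    (hν : ν ∈ Set.Ioo (0 : ℝ) 1) (hτθbar : τθbar ∈ Set.Ioc (0 : ℝ) 1)
    (hρ : M / ((1 - ν) * τθbar) ≤ ρ) :
    (1 / 2 : ℝ) * (Δx ⬝ᵥ B.mulVec Δx) + ν * ρ * θ * Real.sqrt (c ⬝ᵥ c) ≤
      -(gradf ⬝ᵥ Δx) - (1 / 2 : ℝ) * (Δx ⬝ᵥ B.mulVec Δx)
        + ρ * θ * Real.sqrt (c ⬝ᵥ c) := by
  have hkkt := dotProduct_add_dotProduct_mulVec_eq_of_stationary hstat hlin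
  have hlower := dotProduct_nonpos_of_lower_complementarity hμ₁ hx1 hcomp1
  have hupper := dotProduct_nonneg_of_upper_complementarity hμ₂ hx2 hcomp2
  have hM₀ : 0 ≤ M := (Real.sqrt_nonneg _).trans hM
  have hc₀ : 0 ≤ √(c ⬝ᵥ c) := Real.sqrt_nonneg _
  have hlamc : lam ⬝ᵥ c ≤ (1 - ν) * ρ * √(c ⬝ᵥ c) :=
    calc lam ⬝ᵥ c ≤ √(lam ⬝ᵥ lam) * √(c ⬝ᵥ c) := dotProduct_le_sqrt_mul_sqrt lam c
      _ ≤ (1 - ν) * ρ * √(c ⬝ᵥ c) := mul_le_mul_of_nonneg_right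
          (hM.trans (le_one_sub_mul_of_div_le hM₀ hν.2 hτθbar.1 hτθbar.2 hρ)) hc₀
  have hθlamc := mul_le_mul_of_nonneg_left hlamc hθ.1
  linarith

/-- Merit-model reduction (Lemma 1). Under the KKT conditions of the SQP subproblem,
if additionally `‖λ‖ ≤ M` and `ρ ≥ M/((1−ν) τθ̄)` with `ν ∈ (0,1)`, `τθ̄ ∈ (0,1]`,
`θ ≥ τθ̄`, then the local merit-model reduction
`Δφ = −∇fᵀΔx − ½ ΔxᵀBΔx + ρθ‖c‖` satisfies `Δφ ≥ ½ ΔxᵀBΔx + νρθ‖c‖`. -/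
theorem merit_model_reduction {d m : ℕ}
    (B : Matrix (Fin d) (Fin d) ℝ) (κ₁ κ₂ : ℝ) (hκ₁ : 0 < κ₁) (hκ₁₂ : κ₁ ≤ κ₂)
    (hBlow : ∀ z : Fin d → ℝ, κ₁ * (z ⬝ᵥ z) ≤ z ⬝ᵥ B.mulVec z)
    (hBup : ∀ z : Fin d → ℝ, z ⬝ᵥ B.mulVec z ≤ κ₂ * (z ⬝ᵥ z))
    (gradf : Fin d → ℝ) (c : Fin m → ℝ) (Jc : Matrix (Fin m) (Fin d) ℝ)
    (x ℓ u Δx : Fin d → ℝ) (lam : Fin m → ℝ) (μ₁ μ₂ : Fin d → ℝ)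
    (θ : ℝ) (hθ : θ ∈ Set.Icc (0 : ℝ) 1)
    (hx1 : ℓ ≤ x) (hx2 : x ≤ u)
    (hstat : gradf + B.mulVec Δx + Jc.transpose.mulVec lam - μ₁ + μ₂ = 0)
    (hlin : θ • c + Jc.mulVec Δx = 0)
    (hbox1 : ℓ ≤ x + Δx) (hbox2 : x + Δx ≤ u)
    (hμ₁ : 0 ≤ μ₁) (hμ₂ : 0 ≤ μ₂)
    (hcomp1 : μ₁ ⬝ᵥ (ℓ - x - Δx) = 0) (hcomp2 : μ₂ ⬝ᵥ (x + Δx - u) = 0)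
    (M ν τθbar ρ : ℝ)
    (hM : Real.sqrt (lam ⬝ᵥ lam) ≤ M)
    (hν : ν ∈ Set.Ioo (0 : ℝ) 1) (hτθbar : τθbar ∈ Set.Ioc (0 : ℝ) 1)
    (hθlow : τθbar ≤ θ)
    (hρ : M / ((1 - ν) * τθbar) ≤ ρ) :
    (1 / 2 : ℝ) * (Δx ⬝ᵥ B.mulVec Δx) + ν * ρ * θ * Real.sqrt (c ⬝ᵥ c) ≤
      -(gradf ⬝ᵥ Δx) - (1 / 2 : ℝ) * (Δx ⬝ᵥ B.mulVec Δx)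
        + ρ * θ * Real.sqrt (c ⬝ᵥ c) :=
  merit_model_reduction_general B gradf c Jc x ℓ u Δx lam μ₁ μ₂ θ hθ hx1 hx2 hstat hlin hμ₁ hμ₂
    hcomp1 hcomp2 M ν τθbar ρ hM hν hτθbar hρ
end

section
/- Let c̄ : ℝ^d → ℝ^m be continuously differentiable, x̄ feasible (c(x̄) = 0, ℓ ≤ x̄ ≤ u), and suppose EGMFCQ holds at x̄: ∇c(x̄) has full row rank and there exists z with c(x̄) + ∇c(x̄)z = 0, zᵢ > 0 for x̄ᵢ = ℓᵢ, zᵢ < 0 for x̄ᵢ = uᵢ. Suppose (λ̄, μ̄₁, μ̄₂) ∈ ℝ^m × ℝ^d × ℝ^d with μ̄₁, μ̄₂ ≥ 0, ‖(λ̄, μ̄₁, μ̄₂)‖ = 1 satisfies: ∇c(x̄)ᵀλ̄ − μ̄₁ + μ̄₂ = 0, μ̄₁ᵀ(ℓ − x̄) + μ̄₂ᵀ(x̄ − u) = 0. Then a contradiction follows; i.e., no such unit-norm triple exists. -/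
open Matrix

/-- Boundedness of dual multipliers near a feasible EGMFCQ point (key step of
Theorem E.1). Let `x̄` be feasible (`c(x̄) = 0`, `ℓ ≤ x̄ ≤ u`) and suppose EGMFCQ
holds at `x̄`: the rows of `∇c(x̄)` are linearly independent and there is `z` with
`c(x̄) + ∇c(x̄) z = 0`, `zᵢ > 0` when `x̄ᵢ = ℓᵢ`, `zᵢ < 0` when `x̄ᵢ = uᵢ`. Then no
triple `(λ̄, μ̄₁, μ̄₂)` with `μ̄₁, μ̄₂ ≥ 0`, unit norm, `∇c(x̄)ᵀλ̄ − μ̄₁ + μ̄₂ = 0`, and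
`μ̄₁ᵀ(ℓ − x̄) + μ̄₂ᵀ(x̄ − u) = 0` can exist. -/
theorem no_unit_norm_degenerate_multiplier {d m : ℕ}
    (cx : Fin m → ℝ) (Jc : Matrix (Fin m) (Fin d) ℝ) (xbar ℓ u : Fin d → ℝ)
    (hfeas : cx = 0) (hx1 : ℓ ≤ xbar) (hx2 : xbar ≤ u)
    (hrank : LinearIndependent ℝ (fun j : Fin m => Jc j))
    (z : Fin d → ℝ)
    (hz : ∀ j, cx j + Jc.mulVec z j = 0)
    (hzℓ : ∀ i, xbar i = ℓ i → 0 < z i)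
    (hzu : ∀ i, xbar i = u i → z i < 0)
    (lam : Fin m → ℝ) (μ₁ μ₂ : Fin d → ℝ)
    (hμ₁ : 0 ≤ μ₁) (hμ₂ : 0 ≤ μ₂)
    (hnorm : Real.sqrt (lam ⬝ᵥ lam + μ₁ ⬝ᵥ μ₁ + μ₂ ⬝ᵥ μ₂) = 1)
    (hstat : Jc.transpose.mulVec lam - μ₁ + μ₂ = 0)
    (hcomp : μ₁ ⬝ᵥ (ℓ - xbar) + μ₂ ⬝ᵥ (xbar - u) = 0) :
    False := by
  -- Jc z = 0
  have hJz : Jc.mulVec z = 0 := by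
    funext j
    have := hz j
    rw [hfeas] at this
    simpa using this
  -- complementarity: each term ≤ 0, sum zero ⇒ each zero
  have hterm1 : ∀ i, μ₁ i * (ℓ i - xbar i) ≤ 0 := fun i =>
    mul_nonpos_of_nonneg_of_nonpos (hμ₁ i) (by linarith [hx1 i])
  have hterm2 : ∀ i, μ₂ i * (xbar i - u i) ≤ 0 := fun i =>
    mul_nonpos_of_nonneg_of_nonpos (hμ₂ i) (by linarith [hx2 i])
  have hsum : (∑ i, μ₁ i * (ℓ i - xbar i)) + (∑ i, μ₂ i * (xbar i - u i)) = 0 := by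
    simpa [dotProduct, Pi.sub_apply] using hcomp
  have hsum1 : (∑ i, μ₁ i * (ℓ i - xbar i)) = 0 ∧
      (∑ i, μ₂ i * (xbar i - u i)) = 0 := by
    have h1 : (∑ i, μ₁ i * (ℓ i - xbar i)) ≤ 0 :=
      Finset.sum_nonpos fun i _ => hterm1 i
    have h2 : (∑ i, μ₂ i * (xbar i - u i)) ≤ 0 :=
      Finset.sum_nonpos fun i _ => hterm2 i
    constructor <;> linarith
  have heach1 : ∀ i, μ₁ i * (ℓ i - xbar i) = 0 := by
    intro i
    have := (Finset.sum_eq_zero_iff_of_nonpos (fun i _ => hterm1 i)).mp hsum1.1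
    exact this i (Finset.mem_univ i)
  have heach2 : ∀ i, μ₂ i * (xbar i - u i) = 0 := by
    intro i
    have := (Finset.sum_eq_zero_iff_of_nonpos (fun i _ => hterm2 i)).mp hsum1.2
    exact this i (Finset.mem_univ i)
  -- if μ₁ i > 0 then x̄ i = ℓ i, so z i > 0 ; similarly μ₂
  have hzμ1 : ∀ i, 0 ≤ z i * μ₁ i := by
    intro i
    rcases lt_or_eq_of_le (hμ₁ i) with h | h
    · have hx : xbar i = ℓ i := by
        have := heach1 i
        have : ℓ i - xbar i = 0 := by
          rcases mul_eq_zero.mp this with h' | h'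
          · exact absurd h'.symm (ne_of_lt h)
          · exact h'
        linarith
      exact le_of_lt (mul_pos (hzℓ i hx) h)
    · simp [← h]
  have hzμ2 : ∀ i, 0 ≤ -(z i * μ₂ i) := by
    intro i
    rcases lt_or_eq_of_le (hμ₂ i) with h | h
    · have hx : xbar i = u i := by
        have := heach2 i
        have : xbar i - u i = 0 := by
          rcases mul_eq_zero.mp this with h' | h'
          · exact absurd h'.symm (ne_of_lt h)
          · exact h'
        linarith
      have := mul_pos_of_neg_of_neg (hzu i hx) (neg_neg_iff_pos.mpr h)
      nlinarith
    · simp [← h]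
  -- z ⬝ (μ₁ - μ₂) = z ⬝ Jᵀ λ = (Jc z) ⬝ λ = 0
  have hμeq : Jc.transpose.mulVec lam = μ₁ - μ₂ := by
    funext i
    have := congrFun hstat i
    simp [Pi.add_apply, Pi.sub_apply] at this ⊢
    linarith
  have hzdot : z ⬝ᵥ (μ₁ - μ₂) = 0 := by
    rw [← hμeq, dotProduct_mulVec, vecMul_transpose, hJz]
    simp
  have hzdot' : (∑ i, z i * μ₁ i) + (∑ i, -(z i * μ₂ i)) = 0 := by
    have : (∑ i, z i * (μ₁ i - μ₂ i)) = 0 := by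
      simpa [dotProduct, Pi.sub_apply] using hzdot
    rw [← this]
    rw [← Finset.sum_add_distrib]
    apply Finset.sum_congr rfl
    intro i _
    ring
  have hz1 : ∀ i, z i * μ₁ i = 0 := by
    intro i
    have h1 : (∑ i, z i * μ₁ i) ≥ 0 := Finset.sum_nonneg fun i _ => hzμ1 i
    have h2 : (∑ i, -(z i * μ₂ i)) ≥ 0 := Finset.sum_nonneg fun i _ => hzμ2 i
    have hs1 : (∑ i, z i * μ₁ i) = 0 := by linarith
    have := (Finset.sum_eq_zero_iff_of_nonneg (fun i _ => hzμ1 i)).mp hs1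
    exact this i (Finset.mem_univ i)
  have hz2 : ∀ i, z i * μ₂ i = 0 := by
    intro i
    have h1 : (∑ i, z i * μ₁ i) ≥ 0 := Finset.sum_nonneg fun i _ => hzμ1 i
    have h2 : (∑ i, -(z i * μ₂ i)) ≥ 0 := Finset.sum_nonneg fun i _ => hzμ2 i
    have hs2 : (∑ i, -(z i * μ₂ i)) = 0 := by linarith
    have := (Finset.sum_eq_zero_iff_of_nonneg (fun i _ => hzμ2 i)).mp hs2
    have := this i (Finset.mem_univ i)
    linarith
  -- hence μ₁ = μ₂ = 0
  have hμ1zero : μ₁ = 0 := by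
    funext i
    rcases lt_or_eq_of_le (hμ₁ i) with h | h
    · have hx : xbar i = ℓ i := by
        have := heach1 i
        have : ℓ i - xbar i = 0 := by
          rcases mul_eq_zero.mp this with h' | h'
          · exact absurd h'.symm (ne_of_lt h)
          · exact h'
        linarith
      have hzpos := hzℓ i hx
      have := hz1 i
      exact absurd this (ne_of_gt (mul_pos hzpos h))
    · simpa using h.symm
  have hμ2zero : μ₂ = 0 := by
    funext i
    rcases lt_or_eq_of_le (hμ₂ i) with h | h
    · have hx : xbar i = u i := by
        have := heach2 i
        have : xbar i - u i = 0 := by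
          rcases mul_eq_zero.mp this with h' | h'
          · exact absurd h'.symm (ne_of_lt h)
          · exact h'
        linarith
      have hzneg := hzu i hx
      have := hz2 i
      have : z i * μ₂ i < 0 := mul_neg_of_neg_of_pos hzneg h
      linarith [hz2 i]
    · simpa using h.symm
  -- then Jᵀ λ = 0, so λ = 0 by linear independence
  have hJtlam : Jc.transpose.mulVec lam = 0 := by
    rw [hμeq, hμ1zero, hμ2zero]; simp
  have hlam : lam = 0 := by
    have hcomb : (∑ j, lam j • Jc j) = 0 := by
      funext i
      have := congrFun hJtlam i
      simpa [Matrix.mulVec, dotProduct, Matrix.transpose_apply, mul_comm,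
        Finset.sum_apply] using this
    have := Fintype.linearIndependent_iff.mp hrank lam (by simpa using hcomb)
    funext j; exact this j
  rw [hlam, hμ1zero, hμ2zero] at hnorm
  simp at hnorm
end
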